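/- The identity (x₁^k + (1+x₂^k)^k)/(x₁^k x₂) = ((1+x₁^k)/x₂)·((1+x₂^k)^k/x₁^k) − Σ_{j=1}^{k} C(k,j) x₂^{kj−1} holds in ℚ(x₁,x₂), where C(k,j) is the binomial coefficient; consequently (x₁^k + (1+x₂^k)^k)/(x₁^k x₂) ∈ ℚ[x₁, x₂, (1+x₂^k)/x₁, (1+x₁^k)/x₂]. -/

import Mathlib

noncomputable abbrev K : Type := FractionRing (MvPolynomial (Fin 2) ℚ)
noncomputable abbrev x1 : K := algebraMap (MvPolynomial (Fin 2) ℚ) K (MvPolynomial.X 0)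
noncomputable abbrev x2 : K := algebraMap (MvPolynomial (Fin 2) ℚ) K (MvPolynomial.X 1)

/-!
Write `c = (1 + x₂^k)^k`. Then `((1 + x₁^k)/x₂)(c/x₁^k) - (x₁^k + c)/(x₁^k x₂) = (c - 1)/x₂`, and
by the binomial theorem `c - 1 = ∑_{j=1}^k C(k,j) x₂^{kj}` is divisible by `x₂`. The quotient is a
polynomial in `x₂`, so the right-hand side of the identity is visibly a polynomial expression in
the four generators.
-/

open Finset

theorem one_add_pow_eq_one_add_sum_Icc {R : Type*} [CommSemiring R] (x : R) (n : ℕ) :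
    (1 + x) ^ n = 1 + ∑ j ∈ Icc 1 n, (n.choose j : R) * x ^ j := by
  rw [add_comm, add_pow, range_eq_Ico, sum_eq_sum_Ico_succ_bot (Nat.zero_lt_succ n), Nat.zero_add,
    Nat.succ_eq_add_one, Ico_add_one_right_eq_Icc]
  simp [mul_comm]

theorem sum_choose_mul_pow_sub_one_mul {R : Type*} [CommRing R] (y : R) (k : ℕ) :
    (∑ j ∈ Icc 1 k, (k.choose j : R) * y ^ (k * j - 1)) * y = (1 + y ^ k) ^ k - 1 := by
  rw [one_add_pow_eq_one_add_sum_Icc, add_sub_cancel_left, sum_mul]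
  refine sum_congr rfl fun j hj => ?_
  obtain ⟨hj1, hjk⟩ := mem_Icc.mp hj
  rw [mul_assoc, ← pow_succ, ← pow_mul, Nat.sub_add_cancel (Nat.mul_pos (hj1.trans hjk) hj1)]

theorem pow_add_one_add_pow_pow_div_eq {F : Type*} [Field F] {a b : F} (ha : a ≠ 0) (hb : b ≠ 0)
    (k : ℕ) :
    (a ^ k + (1 + b ^ k) ^ k) / (a ^ k * b)
      = ((1 + a ^ k) / b) * ((1 + b ^ k) ^ k / a ^ k)
        - ∑ j ∈ Icc 1 k, (k.choose j : F) * b ^ (k * j - 1) := by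
  rw [eq_div_of_mul_eq hb (sum_choose_mul_pow_sub_one_mul b k)]
  field_simp
  ring

theorem one_add_pow_div_mul_sub_sum_mem_adjoin (R : Type*) {F : Type*} [CommRing R] [Field F]
    [Algebra R F] (a b : F) (k : ℕ) :
    ((1 + a ^ k) / b) * ((1 + b ^ k) ^ k / a ^ k)
        - ∑ j ∈ Icc 1 k, (k.choose j : F) * b ^ (k * j - 1)
      ∈ Algebra.adjoin R ({a, b, (1 + b ^ k) / a, (1 + a ^ k) / b} : Set F) := by
  have generator_mem : ∀ x ∈ ({a, b, (1 + b ^ k) / a, (1 + a ^ k) / b} : Set F),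
      x ∈ Algebra.adjoin R ({a, b, (1 + b ^ k) / a, (1 + a ^ k) / b} : Set F) :=
    fun _ hx => Algebra.subset_adjoin hx
  rw [← div_pow]
  exact sub_mem (mul_mem (generator_mem _ (by simp)) (pow_mem (generator_mem _ (by simp)) k))
    (sum_mem fun _ _ =>
      mul_mem (Subalgebra.natCast_mem _ _) (pow_mem (generator_mem _ (by simp)) _))

theorem algebraMap_X_ne_zero (i : Fin 2) :
    algebraMap (MvPolynomial (Fin 2) ℚ) K (MvPolynomial.X i) ≠ 0 :=
  IsFractionRing.to_map_eq_zero_iff.not.mpr (MvPolynomial.X_ne_zero i)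

theorem stmt_12_general (k : ℕ) :
    (x1 ^ k + (1 + x2 ^ k) ^ k) / (x1 ^ k * x2)
        = ((1 + x1 ^ k) / x2) * ((1 + x2 ^ k) ^ k / x1 ^ k)
          - ∑ j ∈ Finset.Icc 1 k, (k.choose j : K) * x2 ^ (k * j - 1) ∧
    (x1 ^ k + (1 + x2 ^ k) ^ k) / (x1 ^ k * x2)
      ∈ Algebra.adjoin ℚ ({x1, x2, (1 + x2 ^ k) / x1, (1 + x1 ^ k) / x2} : Set K) := by
  have identity :=
    pow_add_one_add_pow_pow_div_eq (algebraMap_X_ne_zero 0) (algebraMap_X_ne_zero 1) k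
  exact ⟨identity, identity ▸ one_add_pow_div_mul_sub_sum_mem_adjoin ℚ x1 x2 k⟩

/-- the identity
(x₁^k + (1+x₂^k)^k)/(x₁^k x₂) = ((1+x₁^k)/x₂)·((1+x₂^k)^k/x₁^k) − Σ_{j=1}^k C(k,j) x₂^{kj−1}
holds in ℚ(x₁,x₂), and consequently the left-hand side lies in
ℚ[x₁, x₂, (1+x₂^k)/x₁, (1+x₁^k)/x₂]. -/
theorem stmt_12 (k : ℕ) (hk : 1 ≤ k) :
    (x1 ^ k + (1 + x2 ^ k) ^ k) / (x1 ^ k * x2)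
        = ((1 + x1 ^ k) / x2) * ((1 + x2 ^ k) ^ k / x1 ^ k)
          - ∑ j ∈ Finset.Icc 1 k, (k.choose j : K) * x2 ^ (k * j - 1) ∧
    (x1 ^ k + (1 + x2 ^ k) ^ k) / (x1 ^ k * x2)
      ∈ Algebra.adjoin ℚ ({x1, x2, (1 + x2 ^ k) / x1, (1 + x1 ^ k) / x2} : Set K) :=
  stmt_12_general k
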